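/- arXiv:1503.08808 — 2 statements merged into one kernel-verified Lean document; each statement's English description precedes it below -/
import Mathlib

section
/- In the setting of the linear control system X' = A(t)X + B(t)U(t) on [t₀,t₁] with X(t₀)=0, let Υ(U) := X_U(t₁) denote the endpoint map on continuous controls U : [t₀,t₁] → ℝ^r. Then a covector ρ₁ ∈ ℝⁿ annihilates the range of Υ if and only if the solution ρ(t) of the adjoint equation ρ' = −A(t)ᵀρ with ρ(t₁) = ρ₁ satisfies B(t)ᵀ ρ(t) = 0 for all t ∈ [t₀,t₁]. -/
/-!
If `X' = A X + B U` and `ρ' = -Aᵀ ρ`, then `(ρ ⬝ᵥ X)' = (Bᵀ ρ) ⬝ᵥ U`. So if `Bᵀ ρ ≡ 0`, the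
function `ρ ⬝ᵥ X` is constant and `ρ₁ ⬝ᵥ X(t₁) = ρ(t₀) ⬝ᵥ X(t₀) = 0`. Conversely, for the control
`U = Bᵀ ρ` the function `ρ ⬝ᵥ X` has derivative `|Bᵀ ρ|² ≥ 0` and vanishes at both ends, so it is
constant and `Bᵀ ρ ≡ 0`.

Both directions need solutions of linear equations on the whole interval. Picard–Lindelöf only
gives them on short intervals, so we solve instead the equation with the state clamped to a box
of radius `R`: its vector field is bounded, so one application of Picard–Lindelöf covers `[a, b]`,
and when `R` is the Gronwall bound of the unclamped equation the clamp is never active.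
-/

open Set Matrix
open scoped NNReal

section Clamp

variable {ι : Type*}

def coordClamp (R : ℝ) (x : ι → ℝ) : ι → ℝ := fun i => max (min (x i) R) (-R)

lemma coordClamp_zero {R : ℝ} (hR : 0 ≤ R) : coordClamp R (0 : ι → ℝ) = 0 := by
  ext i; simp [coordClamp, hR]

variable [Fintype ι]

lemma lipschitzWith_coordClamp (R : ℝ) : LipschitzWith 1 (coordClamp (ι := ι) R) :=
  LipschitzWith.of_dist_le_mul fun x y => by
    rw [NNReal.coe_one, one_mul, dist_pi_le_iff dist_nonneg]
    exact fun i => ((((LipschitzWith.eval i).min_const R).max_const (-R)).dist_le_mul x y).trans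
      (by simp)

lemma norm_coordClamp_le_norm {R : ℝ} (hR : 0 ≤ R) (x : ι → ℝ) : ‖coordClamp R x‖ ≤ ‖x‖ := by
  simpa [coordClamp_zero hR] using (lipschitzWith_coordClamp R).dist_le_mul x 0

lemma norm_coordClamp_le {R : ℝ} (hR : 0 ≤ R) (x : ι → ℝ) : ‖coordClamp R x‖ ≤ R :=
  (pi_norm_le_iff_of_nonneg hR).2 fun i => abs_le.2
    ⟨le_max_right _ _, max_le (min_le_right _ _) (by linarith)⟩

lemma coordClamp_eq_self {R : ℝ} {x : ι → ℝ} (hx : ‖x‖ ≤ R) : coordClamp R x = x := by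
  ext i
  obtain ⟨h₁, h₂⟩ := abs_le.1 ((norm_le_pi_norm x i).trans hx)
  simp [coordClamp, h₁, h₂]

end Clamp

section GlobalExistence

variable {a b : ℝ} {K : ℝ≥0}

theorem exists_forall_mem_Icc_hasDerivWithinAt_of_norm_le {E : Type*} [NormedAddCommGroup E]
    [NormedSpace ℝ E] [CompleteSpace E] {v : ℝ → E → E} {L : ℝ≥0} (hab : a ≤ b)
    (hlip : ∀ t ∈ Icc a b, LipschitzWith K (v t)) (hcont : ∀ x, ContinuousOn (v · x) (Icc a b))
    (hbound : ∀ t ∈ Icc a b, ∀ x, ‖v t x‖ ≤ L) (x₀ : E) :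
    ∃ x : ℝ → E, x a = x₀ ∧ ∀ t ∈ Icc a b, HasDerivWithinAt x (v t (x t)) (Icc a b) t :=
  IsPicardLindelof.exists_eq_forall_mem_Icc_hasDerivWithinAt₀ (t₀ := ⟨a, left_mem_Icc.2 hab⟩)
    (x₀ := x₀) (a := L * (b - a).toNNReal)
    { lipschitzOnWith := fun t ht => (hlip t ht).lipschitzOnWith
      continuousOn := fun x _ => hcont x
      norm_le := fun t ht x _ => hbound t ht x
      mul_max_le := by simp [hab] }

variable {ι : Type*} [Fintype ι]

theorem exists_forall_mem_Icc_hasDerivWithinAt_of_lipschitzWith {v : ℝ → (ι → ℝ) → ι → ℝ}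
    (hab : a ≤ b) (hlip : ∀ t ∈ Icc a b, LipschitzWith K (v t))
    (hcont : ∀ x, ContinuousOn (v · x) (Icc a b)) (x₀ : ι → ℝ) :
    ∃ x : ℝ → ι → ℝ, x a = x₀ ∧ ∀ t ∈ Icc a b, HasDerivWithinAt x (v t (x t)) (Icc a b) t := by
  obtain ⟨F, hF⟩ := isCompact_Icc.exists_bound_of_continuousOn (hcont 0)
  have hF₀ : 0 ≤ F := (norm_nonneg _).trans (hF a (left_mem_Icc.2 hab))
  have growth : ∀ t ∈ Icc a b, ∀ y, ‖v t y‖ ≤ K * ‖y‖ + F := fun t ht y => by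
    have := (hlip t ht).dist_le_mul y 0
    rw [dist_eq_norm, dist_zero_right] at this
    linarith [norm_le_insert' (v t y) (v t 0), hF t ht]
  set R := gronwallBound ‖x₀‖ K F (b - a)
  have hR : ‖x₀‖ ≤ R := by
    simpa [gronwallBound_x0] using
      gronwallBound_mono (norm_nonneg x₀) hF₀ K.2 (sub_nonneg.2 hab)
  have hR₀ : 0 ≤ R := (norm_nonneg _).trans hR
  obtain ⟨x, hx₀, hx⟩ := exists_forall_mem_Icc_hasDerivWithinAt_of_norm_le
    (v := fun t y => v t (coordClamp R y)) (L := (K * R + F).toNNReal) hab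
    (fun t ht => by
      have := (hlip t ht).comp (lipschitzWith_coordClamp R)
      rwa [mul_one] at this)
    (fun y => hcont _)
    (fun t ht y => ((growth t ht _).trans (by gcongr; exact norm_coordClamp_le hR₀ y)).trans
      (Real.le_coe_toNNReal _)) x₀
  have hxR : ∀ t ∈ Icc a b, ‖x t‖ ≤ R := fun t ht =>
    (norm_le_gronwallBound_of_norm_deriv_right_le (K := K) (ε := F)
      (fun s hs => (hx s hs).continuousWithinAt)
      (fun s hs => (hx s (Ico_subset_Icc_self hs)).mono_of_mem_nhdsWithin
        (Icc_mem_nhdsGE_of_mem hs))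
      (congrArg norm hx₀).le (fun s hs => (growth s (Ico_subset_Icc_self hs) _).trans
        (by gcongr; exact norm_coordClamp_le_norm hR₀ _)) t ht).trans
      (gronwallBound_mono (norm_nonneg x₀) hF₀ K.2 (by linarith [ht.2]))
  exact ⟨x, hx₀, fun t ht => by simpa [coordClamp_eq_self (hxR t ht)] using hx t ht⟩

theorem exists_forall_mem_Icc_hasDerivWithinAt_of_lipschitzWith_of_right
    {v : ℝ → (ι → ℝ) → ι → ℝ} (hab : a ≤ b) (hlip : ∀ t ∈ Icc a b, LipschitzWith K (v t))
    (hcont : ∀ x, ContinuousOn (v · x) (Icc a b)) (x₁ : ι → ℝ) :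
    ∃ x : ℝ → ι → ℝ, x b = x₁ ∧ ∀ t ∈ Icc a b, HasDerivWithinAt x (v t (x t)) (Icc a b) t := by
  have hrefl : MapsTo (fun s => a + b - s) (Icc a b) (Icc a b) := fun s hs =>
    ⟨by linarith [hs.2], by linarith [hs.1]⟩
  obtain ⟨y, hy₀, hy⟩ := exists_forall_mem_Icc_hasDerivWithinAt_of_lipschitzWith
    (v := fun s z => -v (a + b - s) z) hab
    (fun s hs => LipschitzWith.of_dist_le_mul fun z w => by
      rw [dist_neg_neg]; exact (hlip _ (hrefl hs)).dist_le_mul z w)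
    (fun z => ((hcont z).comp (continuousOn_const.sub continuousOn_id) hrefl).neg) x₁
  refine ⟨fun t => y (a + b - t), by simpa using hy₀, fun t ht => ?_⟩
  have := (hy _ (hrefl ht)).scomp t ((hasDerivWithinAt_id t _).const_sub (a + b)) hrefl
  simpa [Function.comp_def] using this

end GlobalExistence

section LinearODE

attribute [local instance] Matrix.linftyOpNormedAddCommGroup

variable {ι : Type*} [Fintype ι] {a b : ℝ} {M : ℝ → Matrix ι ι ℝ} {f : ℝ → ι → ℝ}

lemma exists_lipschitzWith_mulVec_add (hM : ContinuousOn M (Icc a b)) (f : ℝ → ι → ℝ) :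
    ∃ K : ℝ≥0, ∀ t ∈ Icc a b, LipschitzWith K (fun x => M t *ᵥ x + f t) := by
  obtain ⟨C, hC⟩ := isCompact_Icc.exists_bound_of_continuousOn hM
  refine ⟨C.toNNReal, fun t ht => LipschitzWith.of_dist_le_mul fun x y => ?_⟩
  rw [dist_add_right, dist_eq_norm, dist_eq_norm, ← mulVec_sub]
  exact (linfty_opNorm_mulVec _ _).trans
    (mul_le_mul_of_nonneg_right ((hC t ht).trans (Real.le_coe_toNNReal C)) (norm_nonneg _))

lemma continuousOn_mulVec_add (hM : ContinuousOn M (Icc a b)) (hf : ContinuousOn f (Icc a b))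
    (x : ι → ℝ) : ContinuousOn (fun t => M t *ᵥ x + f t) (Icc a b) :=
  ((continuous_id.matrix_mulVec continuous_const).comp_continuousOn hM).add hf

theorem exists_hasDerivWithinAt_mulVec_add (hab : a ≤ b) (hM : ContinuousOn M (Icc a b))
    (hf : ContinuousOn f (Icc a b)) (x₀ : ι → ℝ) :
    ∃ x : ℝ → ι → ℝ, x a = x₀ ∧
      ∀ t ∈ Icc a b, HasDerivWithinAt x (M t *ᵥ x t + f t) (Icc a b) t :=
  have ⟨_, hK⟩ := exists_lipschitzWith_mulVec_add hM f
  exists_forall_mem_Icc_hasDerivWithinAt_of_lipschitzWith hab hK (continuousOn_mulVec_add hM hf) x₀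

theorem exists_hasDerivWithinAt_mulVec_add_of_right (hab : a ≤ b)
    (hM : ContinuousOn M (Icc a b)) (hf : ContinuousOn f (Icc a b)) (x₁ : ι → ℝ) :
    ∃ x : ℝ → ι → ℝ, x b = x₁ ∧
      ∀ t ∈ Icc a b, HasDerivWithinAt x (M t *ᵥ x t + f t) (Icc a b) t :=
  have ⟨_, hK⟩ := exists_lipschitzWith_mulVec_add hM f
  exists_forall_mem_Icc_hasDerivWithinAt_of_lipschitzWith_of_right hab hK
    (continuousOn_mulVec_add hM hf) x₁

end LinearODE

section Duality

variable {ι κ : Type*} [Fintype ι] {s : Set ℝ} {t : ℝ}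

theorem HasDerivWithinAt.dotProduct {ρ X : ℝ → ι → ℝ} {p q : ι → ℝ}
    (hρ : HasDerivWithinAt ρ p s t) (hX : HasDerivWithinAt X q s t) :
    HasDerivWithinAt (fun τ => ρ τ ⬝ᵥ X τ) (p ⬝ᵥ X t + ρ t ⬝ᵥ q) s t := by
  have := HasDerivWithinAt.fun_sum (u := Finset.univ) fun i _ =>
    (hasDerivWithinAt_pi.1 hρ i).mul (hasDerivWithinAt_pi.1 hX i)
  exact this.congr_deriv Finset.sum_add_distrib

theorem hasDerivWithinAt_dotProduct_of_adjoint [Fintype κ] {ρ X : ℝ → ι → ℝ}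
    {A : Matrix ι ι ℝ} {B : Matrix ι κ ℝ} {u : κ → ℝ}
    (hρ : HasDerivWithinAt ρ (-(Aᵀ *ᵥ ρ t)) s t) (hX : HasDerivWithinAt X (A *ᵥ X t + B *ᵥ u) s t) :
    HasDerivWithinAt (fun τ => ρ τ ⬝ᵥ X τ) (Bᵀ *ᵥ ρ t ⬝ᵥ u) s t := by
  convert hρ.dotProduct hX using 1
  simp only [dotProduct_add, neg_dotProduct, dotProduct_mulVec, mulVec_transpose]
  ring

end Duality

theorem eq_zero_of_hasDerivWithinAt_nonneg_of_eq {g g' : ℝ → ℝ} {a b : ℝ} (hab : a < b)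
    (hg : ∀ t ∈ Icc a b, HasDerivWithinAt g (g' t) (Icc a b) t)
    (hg' : ∀ t ∈ Icc a b, 0 ≤ g' t) (hgab : g a = g b) : ∀ t ∈ Icc a b, g' t = 0 := by
  have hmono : MonotoneOn g (Icc a b) :=
    monotoneOn_of_hasDerivWithinAt_nonneg (convex_Icc a b)
      (fun t ht => (hg t ht).continuousWithinAt)
      (fun t ht => (hg t (interior_subset ht)).mono interior_subset)
      (fun t ht => hg' t (interior_subset ht))
  have hconst : ∀ t ∈ Icc a b, g t = g a := fun t ht =>
    le_antisymm (hgab ▸ hmono ht (right_mem_Icc.2 hab.le) ht.2)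
      (hmono (left_mem_Icc.2 hab.le) ht ht.1)
  intro t ht
  exact (uniqueDiffOn_Icc hab t ht).eq_deriv _ (hg t ht)
    ((hasDerivWithinAt_const t _ (g a)).congr hconst (hconst t ht))

/-- Proposition 2.4 (ODE form): a covector `ρ₁` annihilates the range of the
endpoint map `U ↦ X_U(t₁)` of the linear control system `X' = A(t)X + B(t)U(t)`,
`X(t₀) = 0`, iff the solution `ρ` of the adjoint equation `ρ' = -A(t)ᵀρ` with
`ρ(t₁) = ρ₁` satisfies `B(t)ᵀ ρ(t) = 0` for all `t ∈ [t₀,t₁]`. -/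
theorem stmt_6 (n r : ℕ) (t₀ t₁ : ℝ) (ht : t₀ < t₁)
    (A : ℝ → Matrix (Fin n) (Fin n) ℝ) (B : ℝ → Matrix (Fin n) (Fin r) ℝ)
    (hA : ContinuousOn A (Icc t₀ t₁)) (hB : ContinuousOn B (Icc t₀ t₁))
    (ρ₁ : Fin n → ℝ) :
    (∀ U : ℝ → Fin r → ℝ, ContinuousOn U (Icc t₀ t₁) →
      ∀ X : ℝ → Fin n → ℝ,
        (∀ t ∈ Icc t₀ t₁,
          HasDerivWithinAt X ((A t).mulVec (X t) + (B t).mulVec (U t)) (Icc t₀ t₁) t) →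
        X t₀ = 0 → dotProduct ρ₁ (X t₁) = 0) ↔
    (∀ ρ : ℝ → Fin n → ℝ,
      (∀ t ∈ Icc t₀ t₁,
        HasDerivWithinAt ρ (-((A t)ᵀ.mulVec (ρ t))) (Icc t₀ t₁) t) →
      ρ t₁ = ρ₁ → ∀ t ∈ Icc t₀ t₁, (B t)ᵀ.mulVec (ρ t) = 0) := by
  have hBT : ContinuousOn (fun t => (B t)ᵀ) (Icc t₀ t₁) :=
    continuous_id.matrix_transpose.comp_continuousOn hB
  constructor
  · intro hann ρ hρ hρ₁
    set U := fun t => (B t)ᵀ *ᵥ ρ t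
    have hU : ContinuousOn U (Icc t₀ t₁) :=
      (continuous_fst.matrix_mulVec continuous_snd).comp_continuousOn
        (hBT.prodMk fun t ht => (hρ t ht).continuousWithinAt)
    have hBU : ContinuousOn (fun t => B t *ᵥ U t) (Icc t₀ t₁) :=
      (continuous_fst.matrix_mulVec continuous_snd).comp_continuousOn (hB.prodMk hU)
    obtain ⟨X, hX₀, hX⟩ := exists_hasDerivWithinAt_mulVec_add ht.le hA hBU 0
    have hzero := eq_zero_of_hasDerivWithinAt_nonneg_of_eq ht
      (fun t ht => hasDerivWithinAt_dotProduct_of_adjoint (hρ t ht) (hX t ht))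
      (fun t _ => Finset.sum_nonneg fun i _ => mul_self_nonneg _)
      (by simp [hX₀, hρ₁, hann U hU X hX hX₀])
    exact fun t ht => dotProduct_self_eq_zero.1 (hzero t ht)
  · intro hadj U _ X hX hX₀
    obtain ⟨ρ, hρ₁, hρ⟩ := exists_hasDerivWithinAt_mulVec_add_of_right ht.le
      (continuous_id.matrix_transpose.comp_continuousOn hA).neg (continuousOn_const (c := 0)) ρ₁
    have hρ' : ∀ t ∈ Icc t₀ t₁, HasDerivWithinAt ρ (-((A t)ᵀ *ᵥ ρ t)) (Icc t₀ t₁) t :=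
      fun t ht => by simpa [neg_mulVec] using hρ t ht
    have hg : ∀ t ∈ Icc t₀ t₁, HasDerivWithinAt (fun τ => ρ τ ⬝ᵥ X τ) 0 (Icc t₀ t₁) t :=
      fun t ht => by
        simpa [hadj ρ hρ' hρ₁ t ht] using
          hasDerivWithinAt_dotProduct_of_adjoint (hρ' t ht) (hX t ht)
    have hconst := constant_of_has_deriv_right_zero (fun t ht => (hg t ht).continuousWithinAt)
      fun t ht => (hg t (Ico_subset_Icc_self ht)).mono_of_mem_nhdsWithin (Icc_mem_nhdsGE_of_mem ht)
    simpa [hρ₁, hX₀] using hconst t₁ (right_mem_Icc.2 ht.le)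
end

section
/- Gauge invariance of Pontryagin's system: let f : ℝ × ℝⁿ → ℝ be C², and suppose (q(t), z(t), p(t)) solves q' = ψ, p_i' = ∂L/∂q^i − p_k ∂ψ^k/∂q^i, p_i ∂ψ^i/∂z^A = ∂L/∂z^A. Define L̃ := L + ∂f/∂t + (∂f/∂q^k) ψ^k and p̃_i(t) := p_i(t) + (∂f/∂q^i)(t, q(t)). Then (q(t), z(t), p̃(t)) solves the same system with L replaced by L̃. -/
open Set

/-- Pontryagin's system (3.10a,b,c) along a curve `(q, z, p)` on `[t₀,t₁]`, with
partial derivatives expressed as Fréchet derivatives of the coordinate slices. -/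
def PontrSys (n r : ℕ) (t₀ t₁ : ℝ)
    (ψ : ℝ → (Fin n → ℝ) → (Fin r → ℝ) → Fin n → ℝ)
    (L : ℝ → (Fin n → ℝ) → (Fin r → ℝ) → ℝ)
    (q : ℝ → Fin n → ℝ) (z : ℝ → Fin r → ℝ) (p : ℝ → Fin n → ℝ) : Prop :=
  (∀ t ∈ Icc t₀ t₁, ∀ i : Fin n,
    HasDerivAt (fun u => q u i) (ψ t (q t) (z t) i) t) ∧
  (∀ t ∈ Icc t₀ t₁, ∀ i : Fin n,
    HasDerivAt (fun u => p u i)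
      (fderiv ℝ (fun q' => L t q' (z t)) (q t) ((Pi.single i 1 : Fin n → ℝ))
        - ∑ k, p t k *
          fderiv ℝ (fun q' => ψ t q' (z t) k) (q t) ((Pi.single i 1 : Fin n → ℝ))) t) ∧
  (∀ t ∈ Icc t₀ t₁, ∀ A : Fin r,
    (∑ i, p t i *
      fderiv ℝ (fun z' => ψ t (q t) z' i) (z t) ((Pi.single A 1 : Fin r → ℝ)))
    = fderiv ℝ (fun z' => L t (q t) z') (z t) ((Pi.single A 1 : Fin r → ℝ)))

/-!
Along a solution, the momentum shift `∂f/∂q^i (t, q(t))` has time derivative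
`D²f(t, q)((1, ψ), e_i)`. The `q^i`-derivative of the gauge term `∂f/∂t + (∂f/∂q^k) ψ^k` is
`D²f(t, q)(e_i, (1, ψ)) + (∂f/∂q^k) ∂ψ^k/∂q^i`: by symmetry of the Hessian of the `C²` function
`f` the first summand is that time derivative, and the second is the term the shifted momenta add
to the right-hand side of the adjoint equation. In the `z`-directions only
`(∂f/∂q^k) ∂ψ^k/∂z^A` appears, and it is absorbed the same way.
-/

theorem ContinuousLinearMap.map_one_prod_eq_add_sum {R ι M : Type*} [Semiring R]
    [TopologicalSpace R] [Fintype ι] [DecidableEq ι] [AddCommMonoid M] [Module R M]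
    [TopologicalSpace M] (ℓ : R × (ι → R) →L[R] M) (v : ι → R) :
    ℓ (1, v) = ℓ (1, 0) + ∑ k, v k • ℓ (0, Pi.single k 1) := by
  have hv : ((1, v) : R × (ι → R)) = (1, 0) + ∑ k, v k • (0, Pi.single k 1) := by
    ext <;> simp [Prod.fst_sum, Prod.snd_sum, ← pi_eq_sum_univ' v]
  rw [hv, map_add, map_sum]
  simp only [map_smul]

section Slices

variable {𝕜 T E G H : Type*} [NontriviallyNormedField 𝕜] [NormedAddCommGroup T]
  [NormedSpace 𝕜 T] [NormedAddCommGroup E] [NormedSpace 𝕜 E] [NormedAddCommGroup G]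
  [NormedSpace 𝕜 G] [NormedAddCommGroup H] [NormedSpace 𝕜 H] {g : T × E × G → H} {t : T} {e : E}
  {w : G}

theorem DifferentiableAt.comp_prodMk_mid (hg : DifferentiableAt 𝕜 g (t, e, w)) :
    DifferentiableAt 𝕜 (fun e' => g (t, e', w)) e :=
  hg.comp e (f := fun e' => (t, e', w)) (by fun_prop)

theorem DifferentiableAt.comp_prodMk_right (hg : DifferentiableAt 𝕜 g (t, e, w)) :
    DifferentiableAt 𝕜 (fun w' => g (t, e, w')) w :=
  hg.comp w (f := fun w' => (t, e, w')) (by fun_prop)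

end Slices

section OperatorValued

variable {E X M : Type*} [NormedAddCommGroup E] [NormedSpace ℝ E] [NormedAddCommGroup X]
  [NormedSpace ℝ X] [NormedAddCommGroup M] [NormedSpace ℝ M] {G : ℝ × E → X →L[ℝ] M}

theorem DifferentiableAt.hasDerivAt_apply_along_graph {q : ℝ → E} {q' : E} {t : ℝ}
    (hG : DifferentiableAt ℝ G (t, q t)) (hq : HasDerivAt q q' t) (w : X) :
    HasDerivAt (fun u => G (u, q u) w) (fderiv ℝ G (t, q t) (1, q') w) t :=
  (((ContinuousLinearMap.apply ℝ M w).hasFDerivAt.comp (t, q t)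
    hG.hasFDerivAt).comp_hasDerivAt t ((hasDerivAt_id t).prodMk hq) :)

theorem DifferentiableAt.hasFDerivAt_apply_slice {t : ℝ} {x : E}
    (hG : DifferentiableAt ℝ G (t, x)) (w : X) :
    HasFDerivAt (fun x' => G (t, x') w) ((fderiv ℝ G (t, x) ∘L .inr ℝ ℝ E).flip w) x :=
  (ContinuousLinearMap.apply ℝ M w).hasFDerivAt.comp x
    (hG.hasFDerivAt.comp x (hasFDerivAt_prodMk_right t x))

end OperatorValued

section GaugeTerm

variable {ι E : Type*} [Fintype ι] [NormedAddCommGroup E] [NormedSpace ℝ E]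

theorem fderiv_add_const_add_sum_mul_apply {g : E → ℝ} {φ : E → ι → ℝ} {w v : E} (c : ℝ)
    (a : ι → ℝ) (hg : DifferentiableAt ℝ g w)
    (hφ : ∀ k, DifferentiableAt ℝ (fun w' => φ w' k) w) :
    fderiv ℝ (fun w' => g w' + c + ∑ k, a k * φ w' k) w v
      = fderiv ℝ g w v + ∑ k, a k * fderiv ℝ (fun w' => φ w' k) w v := by
  have H : HasFDerivAt (fun w' => g w' + c + ∑ k, a k * φ w' k) _ w :=
    (hg.hasFDerivAt.add_const c).add
      (HasFDerivAt.fun_sum (u := Finset.univ) fun k _ => (hφ k).hasFDerivAt.const_mul (a k))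
  simp [H.fderiv]

theorem fderiv_add_gauge_apply [DecidableEq ι] {F : ℝ × (ι → ℝ) → ℝ} {g : (ι → ℝ) → ℝ}
    {φ : (ι → ℝ) → ι → ℝ} {t : ℝ} {x v : ι → ℝ} (hF : ContDiffAt ℝ 2 F (t, x))
    (hg : DifferentiableAt ℝ g x) (hφ : ∀ k, DifferentiableAt ℝ (fun x' => φ x' k) x) :
    fderiv ℝ (fun x' => g x' + fderiv ℝ F (t, x') (1, 0)
        + ∑ k, fderiv ℝ F (t, x') (0, Pi.single k 1) * φ x' k) x v
      = fderiv ℝ g x v + fderiv ℝ (fderiv ℝ F) (t, x) (1, φ x) (0, v)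
        + ∑ k, fderiv ℝ F (t, x) (0, Pi.single k 1) * fderiv ℝ (fun x' => φ x' k) x v := by
  have hDF : DifferentiableAt ℝ (fderiv ℝ F) (t, x) :=
    (hF.fderiv_right (m := 1) le_rfl).differentiableAt one_ne_zero
  have hsymm : IsSymmSndFDerivAt ℝ F (t, x) := hF.isSymmSndFDerivAt (by simp)
  have H : HasFDerivAt (fun x' => g x' + fderiv ℝ F (t, x') (1, 0)
      + ∑ k, fderiv ℝ F (t, x') (0, Pi.single k 1) * φ x' k) _ x :=
    (hg.hasFDerivAt.add (hDF.hasFDerivAt_apply_slice (1, 0))).add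
      (HasFDerivAt.fun_sum (u := Finset.univ) fun k _ =>
        (hDF.hasFDerivAt_apply_slice (0, Pi.single k 1)).mul (hφ k).hasFDerivAt)
  rw [hsymm.eq (1, φ x) (0, v), ContinuousLinearMap.map_one_prod_eq_add_sum, H.fderiv]
  simp only [add_apply, ContinuousLinearMap.flip_apply, ContinuousLinearMap.comp_apply,
    ContinuousLinearMap.inr_apply, sum_apply, smul_apply, smul_eq_mul]
  rw [Finset.sum_add_distrib]
  ring

end GaugeTerm

/-- Gauge invariance (3.12): adding the total time derivative of `f(t,q)` to the
Lagrangian, `L̃ = L + ∂f/∂t + (∂f/∂q^k)ψ^k`, and shifting the momenta,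
`p̃_i = p_i + ∂f/∂q^i`, maps solutions of Pontryagin's system to solutions. -/
theorem stmt_15 (n r : ℕ) (t₀ t₁ : ℝ)
    (ψ : ℝ → (Fin n → ℝ) → (Fin r → ℝ) → Fin n → ℝ)
    (L : ℝ → (Fin n → ℝ) → (Fin r → ℝ) → ℝ)
    (hψ : ∀ i, Differentiable ℝ
      (fun x : ℝ × (Fin n → ℝ) × (Fin r → ℝ) => ψ x.1 x.2.1 x.2.2 i))
    (hL : Differentiable ℝ
      (fun x : ℝ × (Fin n → ℝ) × (Fin r → ℝ) => L x.1 x.2.1 x.2.2))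
    (f : ℝ → (Fin n → ℝ) → ℝ)
    (hf : ContDiff ℝ 2 (fun x : ℝ × (Fin n → ℝ) => f x.1 x.2))
    (q : ℝ → Fin n → ℝ) (z : ℝ → Fin r → ℝ) (p : ℝ → Fin n → ℝ)
    (hsys : PontrSys n r t₀ t₁ ψ L q z p) :
    PontrSys n r t₀ t₁ ψ
      (fun t q' z' => L t q' z'
        + fderiv ℝ (fun x : ℝ × (Fin n → ℝ) => f x.1 x.2) (t, q') (1, 0)
        + ∑ k, fderiv ℝ (fun x : ℝ × (Fin n → ℝ) => f x.1 x.2) (t, q')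
            (0, Pi.single k 1) * ψ t q' z' k)
      q z
      (fun u i => p u i
        + fderiv ℝ (fun x : ℝ × (Fin n → ℝ) => f x.1 x.2) (u, q u)
            (0, Pi.single i 1)) := by
  obtain ⟨hq, hp, hz⟩ := hsys
  refine ⟨hq, fun t ht i => ?_, fun t ht A => ?_⟩
  · have hDF := (hf.fderiv_right (m := 1) le_rfl).differentiable one_ne_zero
    have hshift := (hDF (t, q t)).hasDerivAt_apply_along_graph (hasDerivAt_pi.2 (hq t ht))
      (0, Pi.single i 1)
    refine ((hp t ht i).add hshift).congr_deriv ?_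
    rw [fderiv_add_gauge_apply hf.contDiffAt (hL _).comp_prodMk_mid
      fun k => (hψ k _).comp_prodMk_mid]
    simp only [add_mul, Finset.sum_add_distrib]
    ring
  · dsimp only
    rw [fderiv_add_const_add_sum_mul_apply _ _ (hL _).comp_prodMk_right
      fun k => (hψ k _).comp_prodMk_right, ← hz t ht A]
    simp only [add_mul, Finset.sum_add_distrib]
end
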